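/- The function g₂(p) = e^{-(p − 1/2 + (1/2)√(4p−3))} (p − 1/2 + (1/2)√(4p−3))^{p−1/2} / Γ(p) is decreasing in p on [1,∞). -/

import Mathlib

/-!
With `s = √(4p - 3)`, the point `m = p - 1/2 + s/2` equals `(s + 1)² / 4`, while
`p - 1/2 = (s² + 1) / 4`. Then `log g₂ = (p - 1/2) log m - m - log Γ(p)` has derivative
`log m - 2/(s + 1) - ψ(p)`, with `ψ = (log Γ)'`. Both `log m - 2/(s + 1) ≤ log (p - 1/2)`
(this is `e^{-w} ≤ 1 - w + w²/2` at `w = 2/(s + 1)`) and `log (p - 1/2) ≤ ψ(p)` hold.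
The latter follows by pushing `ψ(p)` to `ψ(p + n + 1) = ψ(p) + ∑_{k ≤ n} 1/(p + k)`, bounding
`ψ(p + n + 1) ≥ log (p + n)` by convexity of `log Γ`, telescoping
`1/t ≤ log (t + 1/2) - log (t - 1/2)`, and letting `n → ∞`.
-/

open Real Set Filter Topology

lemma exp_neg_le_one_sub_add_sq_div_two {w : ℝ} (hw : 0 ≤ w) :
    exp (-w) ≤ 1 - w + w ^ 2 / 2 := by
  have hderiv (x : ℝ) :
      HasDerivAt (fun w : ℝ => 1 - w + w ^ 2 / 2 - exp (-w)) (x - 1 + exp (-x)) x := by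
    have := ((((hasDerivAt_id x).const_sub 1).add ((hasDerivAt_pow 2 x).div_const 2)).sub
      ((hasDerivAt_neg x).exp))
    refine this.congr_deriv ?_
    simp only [Nat.cast_ofNat, Nat.add_one_sub_one, pow_one]
    ring
  have hmono := monotone_of_hasDerivAt_nonneg hderiv fun x =>
    show (0 : ℝ) ≤ _ by linarith [add_one_le_exp (-x)]
  simpa using hmono hw

lemma two_mul_le_log_one_add_sub_log_one_sub {x : ℝ} (h0 : 0 ≤ x) (h1 : x < 1) :
    2 * x ≤ log (1 + x) - log (1 - x) := by
  have hsum := hasSum_log_sub_log_of_abs_lt_one (abs_lt.mpr ⟨by linarith, h1⟩)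
  simpa using le_hasSum hsum 0 fun k _ => by positivity

lemma inv_le_log_add_half_sub_log_sub_half {t : ℝ} (ht : 1 / 2 < t) :
    t⁻¹ ≤ log (t + 1 / 2) - log (t - 1 / 2) := by
  have ht0 : 0 < t := by linarith
  have h := two_mul_le_log_one_add_sub_log_one_sub (x := (2 * t)⁻¹) (by positivity)
    (inv_lt_one_of_one_lt₀ (by linarith))
  have hplus : 1 + (2 * t)⁻¹ = (t + 1 / 2) / t := by field_simp
  have hminus : 1 - (2 * t)⁻¹ = (t - 1 / 2) / t := by field_simp
  rw [hplus, hminus, log_div (by linarith) ht0.ne', log_div (by linarith) ht0.ne'] at h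
  have htwo : 2 * (2 * t)⁻¹ = t⁻¹ := by field_simp
  linarith

lemma differentiableAt_log_Gamma {x : ℝ} (hx : 0 < x) : DifferentiableAt ℝ (log ∘ Gamma) x :=
  (differentiableAt_Gamma fun m => ((neg_nonpos.mpr m.cast_nonneg).trans_lt hx).ne').log
    (Gamma_pos_of_pos hx).ne'

lemma log_Gamma_add_one {x : ℝ} (hx : 0 < x) : log (Gamma (x + 1)) = log (Gamma x) + log x := by
  rw [Gamma_add_one hx.ne', log_mul hx.ne' (Gamma_pos_of_pos hx).ne', add_comm]

lemma deriv_log_Gamma_add_one {x : ℝ} (hx : 0 < x) :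
    deriv (log ∘ Gamma) (x + 1) = deriv (log ∘ Gamma) x + x⁻¹ := by
  rw [← deriv_comp_add_const, ← deriv_log,
    ← deriv_add (differentiableAt_log_Gamma hx) (differentiableAt_log hx.ne')]
  refine EventuallyEq.deriv_eq ?_
  filter_upwards [eventually_gt_nhds hx] with y hy using log_Gamma_add_one hy

lemma deriv_log_Gamma_add_nat {x : ℝ} (hx : 0 < x) (n : ℕ) :
    deriv (log ∘ Gamma) (x + n) =
      deriv (log ∘ Gamma) x + ∑ k ∈ Finset.range n, (x + k)⁻¹ := by
  induction n with
  | zero => simp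
  | succ n ih =>
    rw [Nat.cast_succ, ← add_assoc, deriv_log_Gamma_add_one (by positivity), ih,
      Finset.sum_range_succ, add_assoc]

lemma log_le_deriv_log_Gamma_add_one {x : ℝ} (hx : 0 < x) :
    log x ≤ deriv (log ∘ Gamma) (x + 1) := by
  have h := convexOn_log_Gamma.slope_le_deriv (mem_Ioi.mpr hx) (mem_Ioi.mpr (by linarith))
    (lt_add_one x) (differentiableAt_log_Gamma (by linarith))
  rwa [slope_def_field, add_sub_cancel_left, div_one, Function.comp_apply, Function.comp_apply,
    log_Gamma_add_one hx, add_sub_cancel_left] at h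

lemma sum_inv_add_le_log_sub_log {p : ℝ} (hp : 1 / 2 < p) (n : ℕ) :
    ∑ k ∈ Finset.range n, (p + k)⁻¹ ≤ log (p + n - 1 / 2) - log (p - 1 / 2) := by
  calc ∑ k ∈ Finset.range n, (p + k)⁻¹
      ≤ ∑ k ∈ Finset.range n, (log (p + (k + 1 : ℕ) - 1 / 2) - log (p + k - 1 / 2)) := by
        refine Finset.sum_le_sum fun k _ => ?_
        have h := inv_le_log_add_half_sub_log_sub_half (t := p + k)
          (by linarith [k.cast_nonneg (α := ℝ)])
        have hk : p + ((k + 1 : ℕ) : ℝ) - 1 / 2 = p + k + 1 / 2 := by push_cast; ring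
        rwa [hk]
    _ = log (p + n - 1 / 2) - log (p - 1 / 2) := by
        rw [Finset.sum_range_sub (fun k : ℕ => log (p + k - 1 / 2))]; simp

lemma log_sub_half_le_deriv_log_Gamma {p : ℝ} (hp : 1 / 2 < p) :
    log (p - 1 / 2) ≤ deriv (log ∘ Gamma) p := by
  have hp0 : 0 < p := by linarith
  have hbound (n : ℕ) :
      log (p - 1 / 2) ≤ deriv (log ∘ Gamma) p + (log (p + n + 1 / 2) - log (p + n)) := by
    have hψ := log_le_deriv_log_Gamma_add_one (x := p + n)
      (by linarith [n.cast_nonneg (α := ℝ)])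
    have hsum := sum_inv_add_le_log_sub_log hp (n + 1)
    rw [add_assoc, ← Nat.cast_add_one, deriv_log_Gamma_add_nat hp0] at hψ
    have hn : p + ((n + 1 : ℕ) : ℝ) - 1 / 2 = p + n + 1 / 2 := by push_cast; ring
    rw [hn] at hsum
    linarith
  have htendsto :
      Tendsto (fun n : ℕ => deriv (log ∘ Gamma) p + (log (p + n + 1 / 2) - log (p + n)))
      atTop (𝓝 (deriv (log ∘ Gamma) p + 0)) :=
    ((tendsto_log_comp_add_sub_log (1 / 2)).comp
      (tendsto_atTop_add_const_left _ p tendsto_natCast_atTop_atTop)).const_add _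
  simpa using ge_of_tendsto' htendsto hbound

lemma log_add_one_sq_div_four_sub_le {s : ℝ} (hs : -1 < s) :
    log ((s + 1) ^ 2 / 4) - 2 / (s + 1) ≤ log ((s ^ 2 + 1) / 4) := by
  have hs1 : 0 < s + 1 := by linarith
  have hexp := exp_neg_le_one_sub_add_sq_div_two (w := 2 / (s + 1)) (by positivity)
  have hid : (s + 1) ^ 2 / 4 * (1 - 2 / (s + 1) + (2 / (s + 1)) ^ 2 / 2) = (s ^ 2 + 1) / 4 := by
    field_simp; ring
  calc log ((s + 1) ^ 2 / 4) - 2 / (s + 1) = log ((s + 1) ^ 2 / 4 * exp (-(2 / (s + 1)))) := by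
        rw [log_mul (by positivity) (exp_pos _).ne', log_exp, sub_eq_add_neg]
    _ ≤ log ((s ^ 2 + 1) / 4) :=
        log_le_log (by positivity) (hid ▸ mul_le_mul_of_nonneg_left hexp (by positivity))

-- The maximizer of `|x f_p'(x)|`: the larger root of `x² - (2p - 1) x + (p - 1)²`.
noncomputable def peakPoint (p : ℝ) : ℝ := p - 1 / 2 + √(4 * p - 3) / 2

lemma peakPoint_pos {p : ℝ} (hp : 3 / 4 ≤ p) : 0 < peakPoint p := by
  unfold peakPoint; linarith [sqrt_nonneg (4 * p - 3)]

lemma peakPoint_eq_sq {p : ℝ} (hp : 3 / 4 ≤ p) :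
    peakPoint p = (√(4 * p - 3) + 1) ^ 2 / 4 := by
  unfold peakPoint; linear_combination (-1 / 4) * sq_sqrt (by linarith : 0 ≤ 4 * p - 3)

lemma hasDerivAt_peakPoint {p : ℝ} (hp : 3 / 4 < p) :
    HasDerivAt peakPoint (1 + (√(4 * p - 3))⁻¹) p := by
  have hsqrt := (hasDerivAt_sqrt (by linarith : 4 * p - 3 ≠ 0)).comp p
    (((hasDerivAt_id p).const_mul 4).sub_const 3)
  refine (((hasDerivAt_id p).sub_const (1 / 2)).add (hsqrt.div_const 2)).congr_deriv ?_
  field_simp; ring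

lemma log_peakPoint_sub_le {p : ℝ} (hp : 3 / 4 ≤ p) :
    log (peakPoint p) - 2 / (√(4 * p - 3) + 1) ≤ log (p - 1 / 2) := by
  have h := log_add_one_sq_div_four_sub_le (s := √(4 * p - 3))
    (by linarith [sqrt_nonneg (4 * p - 3)])
  rwa [← peakPoint_eq_sq hp, sq_sqrt (by linarith),
    show (4 * p - 3 + 1) / 4 = p - 1 / 2 by ring] at h

lemma continuous_peakPoint : Continuous peakPoint := by unfold peakPoint; fun_prop

noncomputable def logG₂ (p : ℝ) : ℝ :=
  (p - 1 / 2) * log (peakPoint p) - peakPoint p - log (Gamma p)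

lemma hasDerivAt_logG₂ {p : ℝ} (hp : 3 / 4 < p) :
    HasDerivAt logG₂
      (log (peakPoint p) - 2 / (√(4 * p - 3) + 1) - deriv (log ∘ Gamma) p) p := by
  have hs : 0 < √(4 * p - 3) := sqrt_pos.mpr (by linarith)
  have hs2 := sq_sqrt (by linarith : 0 ≤ 4 * p - 3)
  have hm := hasDerivAt_peakPoint hp
  have h := ((((hasDerivAt_id p).sub_const (1 / 2)).mul (hm.log (peakPoint_pos hp.le).ne')).sub
    hm).sub (differentiableAt_log_Gamma (by linarith)).hasDerivAt
  refine h.congr_deriv ?_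
  rw [peakPoint_eq_sq hp.le, id_eq]
  field_simp
  linear_combination (-2) * hs2

lemma continuousOn_logG₂ : ContinuousOn logG₂ (Ici (3 / 4)) := fun p hp =>
  ((((continuous_id.sub continuous_const).continuousAt).mul
    (continuous_peakPoint.continuousAt.log (peakPoint_pos hp).ne')).sub
    continuous_peakPoint.continuousAt).sub
    (differentiableAt_log_Gamma (by linarith [mem_Ici.mp hp])).continuousAt |>.continuousWithinAt

lemma antitoneOn_logG₂ : AntitoneOn logG₂ (Ici (3 / 4)) := by
  refine antitoneOn_of_hasDerivWithinAt_nonpos (convex_Ici _) continuousOn_logG₂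
    (fun p hp => ?_) (fun p hp => ?_)
    (f' := fun p => log (peakPoint p) - 2 / (√(4 * p - 3) + 1) - deriv (log ∘ Gamma) p)
  all_goals rw [interior_Ici, mem_Ioi] at hp
  · exact (hasDerivAt_logG₂ hp).hasDerivWithinAt
  · linarith [log_peakPoint_sub_le hp.le, log_sub_half_le_deriv_log_Gamma (p := p) (by linarith)]

lemma exp_logG₂ {p : ℝ} (hp : 3 / 4 ≤ p) :
    exp (logG₂ p) = exp (-peakPoint p) * peakPoint p ^ (p - 1 / 2) / Gamma p := by
  rw [logG₂, exp_sub, exp_log (Gamma_pos_of_pos (by linarith)),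
    rpow_def_of_pos (peakPoint_pos hp), ← exp_add]
  ring_nf

/-- `g₂(p) = e^{-(p-1/2+√(4p-3)/2)} (p-1/2+√(4p-3)/2)^{p-1/2} / Γ(p)` is decreasing on `[1,∞)`. -/
theorem stmt8 :
    AntitoneOn
      (fun p : ℝ =>
        Real.exp (-(p - 1 / 2 + Real.sqrt (4 * p - 3) / 2)) *
          (p - 1 / 2 + Real.sqrt (4 * p - 3) / 2) ^ (p - 1 / 2) / Real.Gamma p)
      (Set.Ici 1) := by
  refine ((exp_monotone.comp_antitoneOn antitoneOn_logG₂).mono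
    (Ici_subset_Ici.mpr (by norm_num))).congr fun p hp => ?_
  exact exp_logG₂ (le_trans (by norm_num) hp)
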